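/- Let G be a discrete group with an approximating sequence {K_n} (normal finite-index subgroups with K_n ⊇ K_{n+1} and ⋂_n K_n = {e}). In the associated HLS groupoid G = ⨆_{n∈ℕ∪{∞}} {n} × G/K_n (with G_∞ = G), topologized so that singletons {(n,g)} for finite n are open and the rays ray_n(g) = {(m, q_m(g)) : m ≥ n, m ∈ ℕ∪{∞}} for g ∈ G, n ∈ ℕ are open, every ray is simultaneously open, closed, and compact; consequently the HLS groupoid is a locally compact Hausdorff space. -/
import Mathlib


/-- The carrier of the HLS groupoid: the fibers `G/K_n` for `n ∈ ℕ` together with the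
fiber `G` at `∞`. -/
abbrev HLSCarrier {G : Type*} [Group G] (K : ℕ → Subgroup G) :=
  (Σ n : ℕ, G ⧸ K n) ⊕ G

/-- The ray `ray_n(g) = {(m, q_m(g)) : m ∈ ℕ∪{∞}, m ≥ n}` through `g` starting at
level `n` (its point at `∞` is `g` itself, since `q_∞ = id`). -/
def hlsRay {G : Type*} [Group G] (K : ℕ → Subgroup G) (g : G) (n : ℕ) :
    Set (HLSCarrier K) :=
  {x | ∃ m ≥ n, x = Sum.inl ⟨m, (g : G ⧸ K m)⟩} ∪ {Sum.inr g}

/-- The HLS topology: generated by the singletons at finite levels and the rays. -/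
def hlsTopology {G : Type*} [Group G] (K : ℕ → Subgroup G) :
    TopologicalSpace (HLSCarrier K) :=
  TopologicalSpace.generateFrom
    ({s | ∃ p : Σ n : ℕ, G ⧸ K n, s = {Sum.inl p}} ∪
     {s | ∃ (g : G) (n : ℕ), s = hlsRay K g n})

section Aux

variable {G : Type*} [Group G] (K : ℕ → Subgroup G)

lemma mem_hlsRay_iff (g : G) (n : ℕ) (x : HLSCarrier K) :
    x ∈ hlsRay K g n ↔ (∃ m ≥ n, x = Sum.inl ⟨m, (g : G ⧸ K m)⟩) ∨ x = Sum.inr g := by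
  simp [hlsRay, Set.mem_union, Set.mem_setOf_eq, Set.mem_singleton_iff, or_comm]

lemma inr_mem_hlsRay (g : G) (n : ℕ) : Sum.inr g ∈ hlsRay K g n :=
  Or.inr rfl

lemma hlsRay_antitone (g : G) {n m : ℕ} (h : n ≤ m) :
    hlsRay K g m ⊆ hlsRay K g n := by
  rintro x (⟨k, hk, rfl⟩ | rfl)
  · exact Or.inl ⟨k, h.trans hk, rfl⟩
  · exact Or.inr rfl

lemma exists_level (hant : Antitone K)
    (hinter : ∀ g : G, (∀ n, g ∈ K n) → g = 1) {g h : G} (hgh : g ≠ h) :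
    ∃ N, ∀ m, N ≤ m → (g : G ⧸ K m) ≠ (h : G ⧸ K m) := by
  by_contra hc
  push_neg at hc
  apply hgh
  rw [← inv_mul_eq_one (a := g)]
  refine hinter _ fun n => ?_
  obtain ⟨m, hm, heq⟩ := hc n
  exact hant hm ((QuotientGroup.eq).mp heq)

lemma hlsRay_disjoint {g h : G} {N : ℕ}
    (hN : ∀ m, N ≤ m → (g : G ⧸ K m) ≠ (h : G ⧸ K m)) :
    Disjoint (hlsRay K g N) (hlsRay K h N) := by
  rw [Set.disjoint_left]
  rintro x (⟨m, hm, rfl⟩ | rfl) hx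
  · rcases hx with ⟨m', hm', heq⟩ | heq
    · obtain ⟨rfl, heq2⟩ := Sigma.mk.inj_iff.mp (Sum.inl.inj heq)
      exact hN m hm (eq_of_heq heq2)
    · exact Sum.inl_ne_inr heq
  · rcases hx with ⟨m', hm', heq⟩ | heq
    · exact Sum.inr_ne_inl heq
    · exact hN N le_rfl (by rw [Sum.inr.inj heq])

section Top

attribute [local instance] hlsTopology

lemma isOpen_hlsRay (g : G) (n : ℕ) : IsOpen (hlsRay K g n) :=
  TopologicalSpace.GenerateOpen.basic _ (Or.inr ⟨g, n, rfl⟩)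

lemma isOpen_hlsSingleton (p : Σ n : ℕ, G ⧸ K n) :
    IsOpen ({Sum.inl p} : Set (HLSCarrier K)) :=
  TopologicalSpace.GenerateOpen.basic _ (Or.inl ⟨p, rfl⟩)

lemma exists_ray_subset (g : G) {U : Set (HLSCarrier K)} (hU : IsOpen U)
    (hg : Sum.inr g ∈ U) : ∃ m, hlsRay K g m ⊆ U := by
  induction hU with
  | basic s hs =>
    rcases hs with ⟨p, rfl⟩ | ⟨h, n, rfl⟩
    · exact absurd hg Sum.inr_ne_inl
    · rcases hg with ⟨m, _, heq⟩ | heq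
      · exact absurd heq Sum.inr_ne_inl
      · obtain rfl := Sum.inr.inj heq
        exact ⟨n, subset_rfl⟩
  | univ => exact ⟨0, Set.subset_univ _⟩
  | inter s t hs ht ihs iht =>
    obtain ⟨m1, h1⟩ := ihs hg.1
    obtain ⟨m2, h2⟩ := iht hg.2
    exact ⟨max m1 m2, Set.subset_inter
      ((hlsRay_antitone K g (le_max_left m1 m2)).trans h1)
      ((hlsRay_antitone K g (le_max_right m1 m2)).trans h2)⟩
  | sUnion S hS ih =>
    obtain ⟨s, hsS, hgs⟩ := hg
    obtain ⟨m, hm⟩ := ih s hsS hgs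
    exact ⟨m, hm.trans (Set.subset_sUnion_of_mem hsS)⟩

lemma isCompact_hlsRay (g : G) (n : ℕ) : IsCompact (hlsRay K g n) := by
  classical
  refine isCompact_of_finite_subcover fun {ι} U hUo hcov => ?_
  obtain ⟨i₀, hi₀⟩ := Set.mem_iUnion.mp (hcov (inr_mem_hlsRay K g n))
  obtain ⟨m, hm⟩ := exists_ray_subset K g (hUo i₀) hi₀
  have hsel : ∀ k : ℕ, ∃ i, n ≤ k → Sum.inl ⟨k, (g : G ⧸ K k)⟩ ∈ U i := by
    intro k
    by_cases hk : n ≤ k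
    · obtain ⟨i, hi⟩ := Set.mem_iUnion.mp (hcov (Or.inl ⟨k, hk, rfl⟩))
      exact ⟨i, fun _ => hi⟩
    · exact ⟨i₀, fun h => absurd h hk⟩
  choose f hf using hsel
  refine ⟨insert i₀ ((Finset.Ico n m).image f), ?_⟩
  rintro x (⟨k, hk, rfl⟩ | rfl)
  · by_cases hkm : m ≤ k
    · exact Set.mem_biUnion (Finset.mem_insert_self _ _) (hm (Or.inl ⟨k, hkm, rfl⟩))
    · refine Set.mem_biUnion (Finset.mem_insert_of_mem ?_) (hf k hk)
      exact Finset.mem_image_of_mem f (Finset.mem_Ico.mpr ⟨hk, lt_of_not_ge hkm⟩)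
  · exact Set.mem_biUnion (Finset.mem_insert_self _ _) (hm (Or.inr rfl))

lemma isClosed_hlsRay (hant : Antitone K)
    (hinter : ∀ g : G, (∀ n, g ∈ K n) → g = 1) (g : G) (n : ℕ) :
    IsClosed (hlsRay K g n) := by
  rw [← isOpen_compl_iff, isOpen_iff_forall_mem_open]
  rintro (p | h) hx
  · exact ⟨{Sum.inl p}, by rintro y rfl; exact hx, isOpen_hlsSingleton K p, rfl⟩
  · have hgh : h ≠ g := by rintro rfl; exact hx (inr_mem_hlsRay K h n)
    obtain ⟨N, hN⟩ := exists_level K hant hinter hgh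
    refine ⟨hlsRay K h N, ?_, isOpen_hlsRay K h N, inr_mem_hlsRay K h N⟩
    rintro y (⟨m, hm, rfl⟩ | rfl)
    · rintro (⟨m', hm', heq⟩ | heq)
      · obtain ⟨rfl, heq2⟩ := Sigma.mk.inj_iff.mp (Sum.inl.inj heq)
        exact hN m hm (eq_of_heq heq2)
      · exact Sum.inl_ne_inr heq
    · rintro (⟨m', hm', heq⟩ | heq)
      · exact Sum.inr_ne_inl heq
      · exact hgh (Sum.inr.inj heq)

end Top

end Aux

/-- In the HLS groupoid of a countable discrete group `G` with an approximating
sequence `{K_n}` (decreasing finite-index normal subgroups with trivial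
intersection), every ray is open, closed and compact; consequently the HLS groupoid
is locally compact and Hausdorff. -/
theorem stmt15 {G : Type*} [Group G] [Countable G]
    (K : ℕ → Subgroup G)
    (hnormal : ∀ n, (K n).Normal)
    (hfinite : ∀ n, (K n).FiniteIndex)
    (hdec : ∀ n, K (n + 1) ≤ K n)
    (hinter : ∀ g : G, (∀ n, g ∈ K n) → g = 1) :
    letI : TopologicalSpace (HLSCarrier K) := hlsTopology K
    (∀ (g : G) (n : ℕ),
      IsOpen (hlsRay K g n) ∧ IsClosed (hlsRay K g n) ∧ IsCompact (hlsRay K g n)) ∧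
    LocallyCompactSpace (HLSCarrier K) ∧ T2Space (HLSCarrier K) := by
  have hant : Antitone K := antitone_nat_of_succ_le hdec
  letI : TopologicalSpace (HLSCarrier K) := hlsTopology K
  refine ⟨fun g n => ⟨isOpen_hlsRay K g n, isClosed_hlsRay K hant hinter g n,
    isCompact_hlsRay K g n⟩, ?_, ?_⟩
  · constructor
    rintro (p | g) U hU
    · exact ⟨{Sum.inl p}, (isOpen_hlsSingleton K p).mem_nhds rfl,
        Set.singleton_subset_iff.mpr (mem_of_mem_nhds hU), isCompact_singleton⟩
    · obtain ⟨V, hVU, hVo, hgV⟩ := mem_nhds_iff.mp hU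
      obtain ⟨m, hm⟩ := exists_ray_subset K g hVo hgV
      exact ⟨hlsRay K g m, (isOpen_hlsRay K g m).mem_nhds (inr_mem_hlsRay K g m),
        hm.trans hVU, isCompact_hlsRay K g m⟩
  · constructor
    rintro (p | g) (q | h) hxy
    · exact ⟨{Sum.inl p}, {Sum.inl q}, isOpen_hlsSingleton K p, isOpen_hlsSingleton K q,
        rfl, rfl, Set.disjoint_singleton.mpr (by simpa using hxy)⟩
    · obtain ⟨i, y⟩ := p
      refine ⟨{Sum.inl ⟨i, y⟩}, hlsRay K h (i + 1), isOpen_hlsSingleton K _,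
        isOpen_hlsRay K h _, Set.mem_singleton _, inr_mem_hlsRay K h _, ?_⟩
      rw [Set.disjoint_left]
      rintro x rfl (⟨m, hm, heq⟩ | heq)
      · have := (Sigma.mk.inj_iff.mp (Sum.inl.inj heq)).1
        omega
      · exact Sum.inl_ne_inr heq
    · obtain ⟨i, y⟩ := q
      refine ⟨hlsRay K g (i + 1), {Sum.inl ⟨i, y⟩}, isOpen_hlsRay K g _,
        isOpen_hlsSingleton K _, inr_mem_hlsRay K g _, Set.mem_singleton _, ?_⟩
      rw [Set.disjoint_right]
      rintro x rfl (⟨m, hm, heq⟩ | heq)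
      · have := (Sigma.mk.inj_iff.mp (Sum.inl.inj heq)).1
        omega
      · exact Sum.inl_ne_inr heq
    · obtain ⟨N, hN⟩ := exists_level K hant hinter
        (fun e => hxy (congrArg Sum.inr e))
      exact ⟨hlsRay K g N, hlsRay K h N, isOpen_hlsRay K g N, isOpen_hlsRay K h N,
        inr_mem_hlsRay K g N, inr_mem_hlsRay K h N, hlsRay_disjoint K hN⟩
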